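/- arXiv:1708.01421 — 7 statements merged into one kernel-verified Lean document; each statement's English description precedes it below -/
import Mathlib

section
/- Let ψ be a formal power series over ℚ with nonzero constant term, let y(x) = x·ψ(x), and let x(y) be the formal power series with zero constant term that is the compositional inverse of y(x) (i.e., substituting x(y) into y(x) gives the identity series y). Then for every formal power series H over ℚ and every integer n ≥ 1, the coefficient of y^n in the composite series H(x(y)) equals (1/n) times the coefficient of a^{n-1} in ψ(a)^{-n}·H'(a), where H' is the formal derivative of H; moreover the constant coefficient of H(x(y)) equals the constant coefficient of H. -/
/-!
Differentiating `H(x(y))` turns `n·[yⁿ] H(x(y))` into `[yⁿ⁻¹] H'(x(y))·x'(y)`. Writing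
`H' = ψⁿ·G` and using `ψ(x(y)) = y / x(y)`, this is the residue of `G(x) x' / xⁿ`, and the
residue is invariant under the change of variables `a = x(y)`, so it equals `[aⁿ⁻¹] G`.
Invariance is checked on monomials `aʲ`, where it reduces to the vanishing of the residue of
the exact differential `d(x⁻ᵉ)` for `e > 0`.
-/

open PowerSeries

/-- Formal composition (substitution) `f(a)` of formal power series: substituting `a`
(which is intended to have zero constant term) into `f`.  Since `a` has zero constant
term, the coefficient of `X^n` in `f(a)` only involves `a^k` for `k ≤ n`. -/
noncomputable def PowerSeries.substitute {R : Type*} [CommRing R] (a f : R⟦X⟧) : R⟦X⟧ :=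
  PowerSeries.mk fun n => ∑ k ∈ Finset.range (n + 1),
    PowerSeries.coeff k f * PowerSeries.coeff n (a ^ k)

namespace PowerSeries

section CommRing

variable {R : Type*} [CommRing R]

theorem coeff_pow_eq_zero_of_lt {a : R⟦X⟧} (ha : constantCoeff a = 0) {n d : ℕ} (h : n < d) :
    coeff n (a ^ d) = 0 :=
  X_pow_dvd_iff.1 (pow_dvd_pow_of_dvd (X_dvd_iff.2 ha) d) n h

theorem substitute_eq_subst {a : R⟦X⟧} (ha : constantCoeff a = 0) (f : R⟦X⟧) :
    substitute a f = f.subst a := by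
  ext n
  rw [coeff_subst' (HasSubst.of_constantCoeff_zero' ha), substitute, coeff_mk,
    finsum_eq_sum_of_support_subset (s := Finset.range (n + 1))]
  · simp only [smul_eq_mul]
  · intro d hd
    by_contra hdn
    simp only [Finset.coe_range, Set.mem_Iio, not_lt] at hdn
    exact hd (by simp [coeff_pow_eq_zero_of_lt ha (show n < d by omega)])

theorem coeff_zero_substitute (a f : R⟦X⟧) : coeff 0 (substitute a f) = coeff 0 f := by
  simp [substitute]

end CommRing

section Field

variable {K : Type*} [Field K] [CharZero K]

theorem coeff_pow_succ_mul_derivative_X_mul {u v : K⟦X⟧} (huv : u * v = 1) (e : ℕ) :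
    coeff e (v ^ (e + 1) * d⁄dX K (X * u)) = if e = 0 then 1 else 0 := by
  have hD : d⁄dX K (X * u) = u + X * d⁄dX K u := by
    simp only [Derivation.leibniz, derivative_X, smul_eq_mul]; ring
  rcases e with _ | k
  · have h0 := congrArg constantCoeff huv
    simp only [map_mul, map_one] at h0
    simp [hD, coeff_zero_eq_constantCoeff_apply, mul_comm v, h0]
  · have hv : u * d⁄dX K v + v * d⁄dX K u = 0 := by
      rw [← smul_eq_mul, ← smul_eq_mul, ← Derivation.leibniz, huv, derivative_one]
    have key : ((k + 1 : ℕ) : K⟦X⟧) * (v ^ (k + 1 + 1) * d⁄dX K (X * u))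
        = ((k + 1 : ℕ) : K⟦X⟧) * v ^ (k + 1) - X * d⁄dX K (v ^ (k + 1)) := by
      rw [derivative_pow, hD, Nat.add_sub_cancel]
      linear_combination (((k + 1 : ℕ) : K⟦X⟧) * v ^ (k + 1)) * huv
        + ((k + 1 : ℕ) : K⟦X⟧) * X * v ^ k * (v * hv - d⁄dX K v * huv)
    have hc := congrArg (coeff (k + 1)) key
    rw [← map_natCast (C (R := K)), map_sub, coeff_C_mul, coeff_C_mul, coeff_succ_X_mul,
      coeff_derivative] at hc
    have hzero : ((k + 1 : ℕ) : K) * coeff (k + 1) (v ^ (k + 1 + 1) * d⁄dX K (X * u)) = 0 := by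
      rw [hc]; push_cast; ring
    rw [if_neg k.succ_ne_zero]
    exact (mul_eq_zero.1 hzero).resolve_left (by exact_mod_cast k.succ_ne_zero)

theorem coeff_pow_succ_mul_X_mul_pow_mul_derivative {u v : K⟦X⟧} (huv : u * v = 1) {j k : ℕ}
    (hjk : j ≤ k) :
    coeff k (v ^ (k + 1) * (X * u) ^ j * d⁄dX K (X * u)) = if j = k then 1 else 0 := by
  have hsplit : v ^ (k + 1) * (X * u) ^ j * d⁄dX K (X * u)
      = X ^ j * (v ^ (k - j + 1) * d⁄dX K (X * u)) := by
    have hvu : (u * v) ^ j = 1 := by rw [huv, one_pow]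
    rw [show k + 1 = k - j + 1 + j by omega, pow_add]
    linear_combination (X ^ j * v ^ (k - j + 1) * d⁄dX K (X * u)) * hvu
  rw [hsplit, coeff_X_pow_mul', if_pos hjk, coeff_pow_succ_mul_derivative_X_mul huv]
  exact if_congr (by omega) rfl rfl

theorem coeff_pow_succ_mul_subst_X_mul_mul_derivative {u v : K⟦X⟧} (huv : u * v = 1)
    (G : K⟦X⟧) (k : ℕ) :
    coeff k (v ^ (k + 1) * G.subst (X * u) * d⁄dX K (X * u)) = coeff k G := by
  have ha : HasSubst (X * u) := HasSubst.of_constantCoeff_zero' (by simp)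
  obtain ⟨S, hS⟩ : ∃ S, G = X ^ (k + 1) * S + (trunc (k + 1) G : K⟦X⟧) :=
    ⟨_, eq_X_pow_mul_shift_add_trunc (k + 1) G⟩
  have hhigh : coeff k (v ^ (k + 1) * (X ^ (k + 1) * S).subst (X * u) * d⁄dX K (X * u)) = 0 := by
    rw [subst_mul ha, subst_pow ha, subst_X ha, mul_pow]
    have hfactor : v ^ (k + 1) * (X ^ (k + 1) * u ^ (k + 1) * S.subst (X * u)) * d⁄dX K (X * u)
        = X ^ (k + 1) * (v ^ (k + 1) * u ^ (k + 1) * S.subst (X * u) * d⁄dX K (X * u)) := by ring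
    rw [hfactor, coeff_X_pow_mul', if_neg (by omega)]
  conv_lhs => rw [hS]
  rw [subst_add ha, mul_add, add_mul, map_add, hhigh, zero_add, subst_coe ha,
    Polynomial.aeval_eq_sum_range' (natDegree_trunc_lt G k),
    Finset.mul_sum, Finset.sum_mul, map_sum]
  have hterm : ∀ j ∈ Finset.range (k + 1),
      coeff k (v ^ (k + 1) * ((trunc (k + 1) G).coeff j • (X * u) ^ j) * d⁄dX K (X * u))
        = if j = k then coeff k G else 0 := by
    intro j hj
    have hjk : j ≤ k := Finset.mem_range_succ_iff.1 hj
    rw [coeff_trunc, if_pos (by omega), mul_smul_comm, smul_mul_assoc, map_smul,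
      coeff_pow_succ_mul_X_mul_pow_mul_derivative huv hjk, smul_eq_mul]
    split_ifs with h <;> simp [h]
  rw [Finset.sum_congr rfl hterm, Finset.sum_ite_eq', if_pos (Finset.self_mem_range_succ k)]

end Field

end PowerSeries

/-- **Lagrange inversion, formal version.**  Let `ψ` be a formal power series over `ℚ`
with nonzero constant term, let `y(x) = x·ψ(x)`, and let `xser = x(y)` be the formal
power series with zero constant term which is the compositional inverse of `y(x)`
(substituting `x(y)` into `y(x)` gives the identity series).  Then for every formal
power series `H` and every `n ≥ 1`, the coefficient of `y^n` in `H(x(y))` equals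
`(1/n)·[a^(n-1)] (ψ(a)^(-n) · H'(a))`, and the constant coefficient of `H(x(y))`
equals that of `H`. -/
theorem lagrange_inversion_formal (ψ : ℚ⟦X⟧) (hψ : constantCoeff ψ ≠ 0)
    (xser : ℚ⟦X⟧) (hx0 : constantCoeff xser = 0)
    (hinv : PowerSeries.substitute xser (PowerSeries.X * ψ) = PowerSeries.X) :
    ∀ H : ℚ⟦X⟧,
      (∀ n : ℕ, 1 ≤ n →
        coeff n (PowerSeries.substitute xser H)
          = (1 / (n : ℚ)) * coeff (n - 1) ((ψ ^ n)⁻¹ * H.derivativeFun)) ∧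
      coeff 0 (PowerSeries.substitute xser H) = coeff 0 H := by
  intro H
  have hx : HasSubst xser := HasSubst.of_constantCoeff_zero' hx0
  set Ψ : ℚ⟦X⟧ := ψ.subst xser with hΨdef
  have hΨ : constantCoeff Ψ ≠ 0 := by
    rwa [← coeff_zero_eq_constantCoeff_apply, hΨdef, ← substitute_eq_subst hx0,
      coeff_zero_substitute, coeff_zero_eq_constantCoeff_apply]
  have hxΨ : xser = X * Ψ⁻¹ := by
    have h : xser * Ψ = X := by rw [← hinv, substitute_eq_subst hx0, subst_mul hx, subst_X hx]
    rw [← h, mul_assoc, PowerSeries.mul_inv_cancel _ hΨ, mul_one]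
  refine ⟨fun n hn => ?_, coeff_zero_substitute xser H⟩
  obtain ⟨k, rfl⟩ := Nat.exists_eq_add_of_le' hn
  set G := (ψ ^ (k + 1))⁻¹ * d⁄dX ℚ H
  have hH' : d⁄dX ℚ H = ψ ^ (k + 1) * G := by
    rw [← mul_assoc, PowerSeries.mul_inv_cancel _ (by simpa using hψ), one_mul]
  calc coeff (k + 1) (substitute xser H)
      = 1 / ((k + 1 : ℕ) : ℚ) * coeff k (d⁄dX ℚ (H.subst xser)) := by
        rw [coeff_derivative, substitute_eq_subst hx0]; push_cast; field_simp
    _ = 1 / ((k + 1 : ℕ) : ℚ) * coeff k (Ψ ^ (k + 1) * G.subst xser * d⁄dX ℚ xser) := by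
        rw [derivative_subst hx, hH', subst_mul hx, subst_pow hx]
    _ = 1 / ((k + 1 : ℕ) : ℚ) * coeff (k + 1 - 1) G := by
        rw [hxΨ, coeff_pow_succ_mul_subst_X_mul_mul_derivative (PowerSeries.inv_mul_cancel _ hΨ),
          Nat.add_sub_cancel]
end

section
/- Let S2(n,m) := n!·[x^n]( (e^x − 1)^m / m! ) denote the Stirling numbers of the second kind. Then in ℚ[[t]] one has Σ_{m≥0} S2(m+3, m)·t^m = t·(1 + 8t + 6t^2)/(1 − t)^7; equivalently, (1 − t)^7 · Σ_{m≥0} S2(m+3,m)·t^m = t + 8t^2 + 6t^3. -/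
/-!
Write `F_d = Σ_m S2(m+d, m) t^m`. Differentiating `(e^x - 1)^(m+1)` shows that `S2` obeys the
recurrence `S2(n+1, m+1) = (m+1) S2(n, m+1) + S2(n, m)` of `Nat.stirlingSecond`, which in terms of
generating functions reads `(1 - t) F_{d+1} = t F_d'`. Hence the numerators
`N_d = (1 - t)^(2d+1) F_d` satisfy `N_0 = 1` and `N_{d+1} = t ((1 - t) N_d' + (2d+1) N_d)`,
so `N_1 = t`, `N_2 = t + 2t^2` and `N_3 = t + 8t^2 + 6t^3`.
-/

open PowerSeries

/-- The Stirling numbers of the second kind, `S2(n,m) = n!·[x^n]((e^x − 1)^m / m!)`. -/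
noncomputable def stirling2 (n m : ℕ) : ℚ :=
  (n.factorial : ℚ) * coeff n ((exp ℚ - 1) ^ m) / m.factorial

theorem stirling2_succ_succ (n m : ℕ) :
    stirling2 (n + 1) (m + 1) = (m + 1) * stirling2 n (m + 1) + stirling2 n m := by
  have hderiv : d⁄dX ℚ ((exp ℚ - 1) ^ (m + 1)) =
      C ((m : ℚ) + 1) * ((exp ℚ - 1) ^ (m + 1) + (exp ℚ - 1) ^ m) := by
    rw [derivative_pow, map_sub, derivative_exp, derivative_one, map_add, map_natCast, map_one]
    push_cast
    ring
  have hcoeff := congrArg (coeff n) hderiv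
  rw [coeff_derivative, coeff_C_mul, map_add] at hcoeff
  simp only [stirling2, Nat.factorial_succ]
  push_cast
  field_simp
  linear_combination hcoeff

theorem stirling2_eq_stirlingSecond : ∀ n m : ℕ, stirling2 n m = n.stirlingSecond m
  | 0, 0 => by simp [stirling2]
  | 0, m + 1 => by simp [stirling2, pow_succ, constantCoeff_exp]
  | n + 1, 0 => by simp [stirling2, coeff_one]
  | n + 1, m + 1 => by
    rw [stirling2_succ_succ, Nat.stirlingSecond_succ_succ, stirling2_eq_stirlingSecond n (m + 1),
      stirling2_eq_stirlingSecond n m]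
    push_cast
    ring

namespace PowerSeries

variable (R : Type*)

noncomputable def stirlingSecondDiagonal [CommSemiring R] (d : ℕ) : R⟦X⟧ :=
  mk fun m => ((m + d).stirlingSecond m : R)

/-- These are the second-order Eulerian polynomials. -/
noncomputable def stirlingSecondDiagonalNumerator [CommRing R] (d : ℕ) : R⟦X⟧ :=
  (1 - X) ^ (2 * d + 1) * stirlingSecondDiagonal R d

variable {R}

theorem stirlingSecondDiagonal_succ [CommSemiring R] (d : ℕ) :
    stirlingSecondDiagonal R (d + 1) =
      X * (stirlingSecondDiagonal R (d + 1) + d⁄dX R (stirlingSecondDiagonal R d)) := by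
  ext (_ | k)
  · simp [stirlingSecondDiagonal]
  · rw [coeff_succ_X_mul, map_add, coeff_derivative]
    simp only [stirlingSecondDiagonal, coeff_mk, show k + 1 + (d + 1) = k + 1 + d + 1 by omega,
      show k + (d + 1) = k + 1 + d by omega, Nat.stirlingSecond_succ_succ]
    push_cast
    ring

theorem stirlingSecondDiagonalNumerator_zero [CommRing R] :
    stirlingSecondDiagonalNumerator R 0 = 1 := by
  simp only [stirlingSecondDiagonalNumerator, stirlingSecondDiagonal, add_zero,
    Nat.stirlingSecond_self, Nat.cast_one]
  rw [mul_comm, pow_one]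
  exact mk_one_mul_one_sub_eq_one R

theorem stirlingSecondDiagonalNumerator_succ [CommRing R] (d : ℕ) :
    stirlingSecondDiagonalNumerator R (d + 1) =
      X * ((1 - X) * d⁄dX R (stirlingSecondDiagonalNumerator R d) +
        (2 * (d : R⟦X⟧) + 1) * stirlingSecondDiagonalNumerator R d) := by
  have hrec : (1 - X) * stirlingSecondDiagonal R (d + 1) =
      X * d⁄dX R (stirlingSecondDiagonal R d) := by
    linear_combination stirlingSecondDiagonal_succ (R := R) d
  simp only [stirlingSecondDiagonalNumerator, Derivation.leibniz, derivative_pow, map_sub,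
    derivative_one, derivative_X, smul_eq_mul, Nat.add_sub_cancel]
  push_cast
  linear_combination (1 - X) ^ (2 * d + 2) * hrec

theorem stirlingSecondDiagonalNumerator_three [CommRing R] :
    stirlingSecondDiagonalNumerator R 3 = X + 8 * X ^ 2 + 6 * X ^ 3 := by
  have h1 : stirlingSecondDiagonalNumerator R 1 = X := by
    simp [stirlingSecondDiagonalNumerator_succ, stirlingSecondDiagonalNumerator_zero]
  have h2 : stirlingSecondDiagonalNumerator R 2 = X + 2 * X ^ 2 := by
    rw [stirlingSecondDiagonalNumerator_succ, h1, derivative_X]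
    ring
  have hderiv_two : d⁄dX R (2 : R⟦X⟧) = 0 := Derivation.map_natCast _ 2
  rw [stirlingSecondDiagonalNumerator_succ, h2]
  simp only [map_add, derivative_X, Derivation.leibniz, Derivation.leibniz_pow,
    Nat.add_one_sub_one, pow_one, smul_eq_mul, mul_one, nsmul_eq_mul, Nat.cast_ofNat, hderiv_two,
    mul_zero, add_zero]
  ring

end PowerSeries

/-- The o.g.f. of the fourth (`d = 3`) diagonal of the Stirling2 triangle:
`Σ_m S2(m+3,m)·t^m = t(1 + 8t + 6t^2)/(1 − t)^7`, stated in the equivalent form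
`(1 − t)^7 · Σ_m S2(m+3,m)·t^m = t + 8t^2 + 6t^3` in `ℚ[[t]]`. -/
theorem stirling2_diagonal_three_ogf :
    (1 - PowerSeries.X : ℚ⟦X⟧) ^ 7 * PowerSeries.mk (fun m => stirling2 (m + 3) m)
      = PowerSeries.X + 8 * PowerSeries.X ^ 2 + 6 * PowerSeries.X ^ 3 := by
  have hdiag : mk (fun m => stirling2 (m + 3) m) = stirlingSecondDiagonal ℚ 3 := by
    ext m
    simp [stirlingSecondDiagonal, stirling2_eq_stirlingSecond]
  rw [hdiag]
  exact stirlingSecondDiagonalNumerator_three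
end

section
/- Let B(n,m) := n!·[x^n]( e^x·(e^x − 1)^m / m! ), i.e., B(n,m) = Σ_{k} binom(n,k)·S2(k,m) where S2 are the Stirling numbers of the second kind (entries of the Sheffer triangle (e^s, e^s − 1), the product of Pascal's triangle with the Stirling2 triangle). Then in ℚ[[t]] one has Σ_{m≥0} B(m+2, m)·t^m = (1 + 2t)/(1 − t)^5; equivalently, (1 − t)^5 · Σ_{m≥0} B(m+2,m)·t^m = 1 + 2t. -/
/-!
Write `e^x - 1 = x·E(x)` with `E = Σ xⁿ/(n+1)!`. Then `e^x (e^x - 1)^m = x^m · e^x E^m`, so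
`B(m+2, m) = (m+2)!/m! · [x²](e^x E^m)`, and `[x²]` of a power of a series with constant
term `1` depends only on its first two higher coefficients. This gives the quartic
`B(m+2, m) = (m+1)(m+2)(m+3)(3m+4)/24 = C(m+4, 4) + 2·C(m+3, 4)`, i.e. the sequence is
`(1 + 2t)·Σ C(m+4, 4) tᵐ`, and `Σ C(m+4, 4) tᵐ = (1 - t)⁻⁵`.
-/

open PowerSeries

/-- The entries of the Sheffer triangle `(e^s, e^s − 1)` (product of Pascal's triangle
with the Stirling2 triangle): `B(n,m) = n!·[x^n](e^x·(e^x − 1)^m / m!)`. -/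
noncomputable def pascalStirling2 (n m : ℕ) : ℚ :=
  (n.factorial : ℚ) * coeff n (exp ℚ * (exp ℚ - 1) ^ m) / m.factorial

namespace PowerSeries

variable {R : Type*} [CommSemiring R]

theorem coeff_two_mul (φ ψ : R⟦X⟧) :
    coeff 2 (φ * ψ) =
      constantCoeff φ * coeff 2 ψ + coeff 1 φ * coeff 1 ψ + coeff 2 φ * constantCoeff ψ := by
  have : Finset.HasAntidiagonal.antidiagonal 2 = {(0, 2), (1, 1), (2, 0)} := rfl
  rw [coeff_mul, this, Finset.sum_insert (by decide), Finset.sum_insert (by decide),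
    Finset.sum_singleton, coeff_zero_eq_constantCoeff, add_assoc]

theorem coeff_two_pow_of_constantCoeff_eq_one {φ : R⟦X⟧} (hφ : constantCoeff φ = 1)
    (n : ℕ) :
    coeff 2 (φ ^ n) = n * coeff 2 φ + n.choose 2 * coeff 1 φ ^ 2 := by
  induction n with
  | zero => simp
  | succ n ih =>
    rw [pow_succ, coeff_two_mul, ih, coeff_one_pow, map_pow, hφ, Nat.choose_succ_succ',
      Nat.choose_one_right]
    push_cast
    ring

variable (A : Type*) [Ring A] [Algebra ℚ A]

noncomputable def expSubOneDivX : A⟦X⟧ := mk fun n => algebraMap ℚ A (1 / (n + 1).factorial)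

theorem X_mul_expSubOneDivX : X * expSubOneDivX A = exp A - 1 := by
  ext (_ | n)
  · simp
  · simp [expSubOneDivX, coeff_succ_X_mul, coeff_exp]

end PowerSeries

theorem coeff_add_two_exp_mul_exp_sub_one_pow (m : ℕ) :
    coeff (m + 2) (exp ℚ * (exp ℚ - 1) ^ m) = ((m : ℚ) + 3) * (3 * m + 4) / 24 := by
  have hE0 : constantCoeff (expSubOneDivX ℚ) = 1 := by simp [expSubOneDivX]
  have hE1 : coeff 1 (expSubOneDivX ℚ) = 1 / 2 := by simp [expSubOneDivX]
  have hE2 : coeff 2 (expSubOneDivX ℚ) = 1 / 6 := by norm_num [expSubOneDivX, Nat.factorial]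
  rw [← X_mul_expSubOneDivX, mul_pow, mul_left_comm, add_comm, coeff_X_pow_mul, coeff_two_mul,
    coeff_two_pow_of_constantCoeff_eq_one hE0, coeff_one_pow, map_pow, hE0, hE1, hE2,
    Nat.cast_choose_two]
  norm_num [coeff_exp, Nat.factorial]
  ring

theorem pascalStirling2_add_two_self (m : ℕ) :
    pascalStirling2 (m + 2) m = ((m : ℚ) + 1) * (m + 2) * (m + 3) * (3 * m + 4) / 24 := by
  have hm : (m.factorial : ℚ) ≠ 0 := by positivity
  rw [pascalStirling2, coeff_add_two_exp_mul_exp_sub_one_pow, Nat.factorial_succ,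
    Nat.factorial_succ]
  push_cast
  field_simp
  ring

theorem Nat.cast_choose_four {K : Type*} [Field K] [CharZero K] (n : ℕ) :
    (n.choose 4 : K) = n * (n - 1) * (n - 2) * (n - 3) / 24 := by
  rw [Nat.cast_choose_eq_descPochhammer_div]
  simp [descPochhammer_succ_eval, Nat.factorial]

theorem pascalStirling2_add_two_self_eq_choose (m : ℕ) :
    pascalStirling2 (m + 2) m = (m + 4).choose 4 + 2 * (m + 3).choose 4 := by
  rw [pascalStirling2_add_two_self, Nat.cast_choose_four, Nat.cast_choose_four]
  push_cast
  ring

theorem mk_pascalStirling2_add_two_self :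
    mk (fun m => pascalStirling2 (m + 2) m) =
      (1 + 2 * X) * mk fun n => ((4 + n).choose 4 : ℚ) := by
  ext (_ | n)
  · simp [pascalStirling2_add_two_self_eq_choose]
  · simp only [add_mul, one_mul, two_mul, map_add, coeff_succ_X_mul, coeff_mk,
      pascalStirling2_add_two_self_eq_choose]
    ring_nf

/-- The o.g.f. of the third (`d = 2`) diagonal of the Sheffer triangle `(e^s, e^s − 1)`:
`Σ_m B(m+2,m)·t^m = (1 + 2t)/(1 − t)^5`, stated in the equivalent form
`(1 − t)^5 · Σ_m B(m+2,m)·t^m = 1 + 2t` in `ℚ[[t]]`. -/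
theorem pascalStirling2_diagonal_two_ogf :
    (1 - PowerSeries.X : ℚ⟦X⟧) ^ 5 * PowerSeries.mk (fun m => pascalStirling2 (m + 2) m)
      = 1 + 2 * PowerSeries.X := by
  rw [mk_pascalStirling2_add_two_self, mul_left_comm, mul_comm _ (mk _),
    mk_add_choose_mul_one_sub_pow_eq_one, mul_one]
end

section
/- Let C(n,m) := n!·[x^n]( e^x·(−log(1 − x))^m / m! ), i.e., C(n,m) = Σ_{k} binom(n,k)·|s|(k,m) where |s| are the unsigned Stirling numbers of the first kind (entries of the Sheffer triangle (e^s, −log(1 − s)), the coefficient triangle of the Charlier polynomials). Then in ℚ[[t]] one has Σ_{m≥0} C(m+2, m)·t^m = (1 + 3t − t^2)/(1 − t)^5; equivalently, (1 − t)^5 · Σ_{m≥0} C(m+2,m)·t^m = 1 + 3t − t^2. -/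
/-!
Since `−log(1 − x) = x·u` with `u = 1 + x/2 + x²/3 + ⋯`, the coefficient `[x^(m+2)]` of
`e^x·(−log(1 − x))^m` is `[x²](e^x·u^m)`, which involves only the first three coefficients of
`u^m` and is therefore quadratic in `m`. Multiplying by `(m+2)!/m!` makes `C(m+2,m)` a quartic
in `m`, namely `binom(m+4,4) + 3·binom(m+3,4) − binom(m+2,4)`, and the numerator `1 + 3t − t²`
is read off from `Σ_m binom(m+4−k,4)·t^m = t^k/(1 − t)^5`.
-/

open PowerSeries

/-- The formal power series `−log(1 − x) = Σ_{n≥1} x^n/n` over `ℚ`. -/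
noncomputable def negLogOneSub : ℚ⟦X⟧ :=
  PowerSeries.mk fun n => if n = 0 then 0 else 1 / (n : ℚ)

/-- The entries of the Sheffer triangle `(e^s, −log(1 − s))` (product of Pascal's
triangle with the unsigned Stirling1 triangle; the coefficient triangle of the
Charlier polynomials): `C(n,m) = n!·[x^n](e^x·(−log(1 − x))^m / m!)`. -/
noncomputable def charlier (n m : ℕ) : ℚ :=
  (n.factorial : ℚ) * coeff n (exp ℚ * negLogOneSub ^ m) / m.factorial

namespace PowerSeries

variable {R : Type*}

lemma coeff_one_pow_of_constantCoeff_eq_one [CommSemiring R] {u : R⟦X⟧}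
    (hu : constantCoeff u = 1) (m : ℕ) :
    coeff 1 (u ^ m) = m * coeff 1 u := by
  induction m with
  | zero => simp
  | succ m ih =>
    rw [pow_succ, coeff_mul, Finset.Nat.sum_antidiagonal_succ, Finset.Nat.antidiagonal_zero,
      Finset.sum_singleton]
    simp only [zero_add, coeff_zero_eq_constantCoeff_apply, map_pow, hu, one_pow, ih]
    push_cast
    ring

lemma coeff_two_pow_of_constantCoeff_eq_one_s10 [CommSemiring R] {u : R⟦X⟧}
    (hu : constantCoeff u = 1) (m : ℕ) :
    coeff 2 (u ^ m) = m * coeff 2 u + m.choose 2 * coeff 1 u ^ 2 := by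
  induction m with
  | zero => simp
  | succ m ih =>
    rw [pow_succ, coeff_mul, Finset.Nat.sum_antidiagonal_succ, Finset.Nat.sum_antidiagonal_succ,
      Finset.Nat.antidiagonal_zero, Finset.sum_singleton]
    simp only [zero_add, coeff_zero_eq_constantCoeff_apply, map_pow, hu, one_pow, ih,
      coeff_one_pow_of_constantCoeff_eq_one hu, Nat.choose_succ_succ', Nat.choose_one_right]
    push_cast
    ring

lemma mk_choose_eq_X_pow_mul [Semiring R] (d k : ℕ) :
    (mk fun n => ((d + n).choose (d + k) : R)) =
      X ^ k * mk fun n => ((d + k + n).choose (d + k) : R) := by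
  ext n
  rw [coeff_X_pow_mul', coeff_mk]
  split_ifs with hkn
  · rw [coeff_mk]
    congr 2
    omega
  · rw [Nat.choose_eq_zero_of_lt (by omega), Nat.cast_zero]

end PowerSeries

lemma negLogOneSub_eq_X_mul : negLogOneSub = X * mk fun n => 1 / ((n : ℚ) + 1) := by
  ext n
  rcases n with _ | n <;> simp [negLogOneSub, coeff_succ_X_mul]

lemma coeff_add_two_exp_mul_negLogOneSub_pow (m : ℕ) :
    coeff (m + 2) (exp ℚ * negLogOneSub ^ m) = 1 / 2 + 5 * m / 6 + m * (m - 1) / 8 := by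
  have hu : constantCoeff (mk fun n => 1 / ((n : ℚ) + 1)) = 1 := by simp
  rw [negLogOneSub_eq_X_mul, mul_pow, mul_left_comm, coeff_X_pow_mul', if_pos (by omega),
    add_tsub_cancel_left, coeff_mul, Finset.Nat.sum_antidiagonal_succ,
    Finset.Nat.sum_antidiagonal_succ, Finset.Nat.antidiagonal_zero, Finset.sum_singleton]
  simp only [coeff_one_pow_of_constantCoeff_eq_one hu, coeff_two_pow_of_constantCoeff_eq_one_s10 hu,
    coeff_zero_eq_constantCoeff_apply, map_pow, hu, one_pow, coeff_exp, coeff_mk, Nat.factorial,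
    Nat.cast_choose_two]
  norm_num
  ring

lemma charlier_add_two_self (m : ℕ) :
    charlier (m + 2) m = (4 + m).choose 4 + 3 * (3 + m).choose 4 - (2 + m).choose 4 := by
  simp only [charlier, coeff_add_two_exp_mul_negLogOneSub_pow,
    Nat.cast_choose_eq_descPochhammer_div, descPochhammer_succ_eval, descPochhammer_zero,
    Polynomial.eval_one, Nat.factorial_succ]
  field_simp
  push_cast
  ring

lemma mk_charlier_add_two_self :
    (mk fun m => charlier (m + 2) m) =
      (1 + 3 * X - X ^ 2) * mk fun n => ((4 + n).choose 4 : ℚ) := by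
  have h₁ : (mk fun n => ((3 + n).choose 4 : ℚ)) = X * mk fun n => ((4 + n).choose 4 : ℚ) := by
    simpa using mk_choose_eq_X_pow_mul 3 1
  have h₂ : (mk fun n => ((2 + n).choose 4 : ℚ)) = X ^ 2 * mk fun n => ((4 + n).choose 4 : ℚ) :=
    mk_choose_eq_X_pow_mul 2 2
  rw [sub_mul, add_mul, one_mul, mul_assoc, ← h₁, ← h₂, ← map_ofNat C 3]
  ext n
  simp [charlier_add_two_self, coeff_C_mul]

/-- The o.g.f. of the third (`d = 2`) diagonal of the Sheffer triangle
`(e^s, −log(1 − s))`: `Σ_m C(m+2,m)·t^m = (1 + 3t − t^2)/(1 − t)^5`, stated in the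
equivalent form `(1 − t)^5 · Σ_m C(m+2,m)·t^m = 1 + 3t − t^2` in `ℚ[[t]]`. -/
theorem charlier_diagonal_two_ogf :
    (1 - PowerSeries.X : ℚ⟦X⟧) ^ 5 * PowerSeries.mk (fun m => charlier (m + 2) m)
      = 1 + 3 * PowerSeries.X - PowerSeries.X ^ 2 := by
  rw [mk_charlier_add_two_self]
  linear_combination (1 + 3 * X - X ^ 2 : ℚ⟦X⟧) * mk_add_choose_mul_one_sub_pow_eq_one ℚ 4
end

section
/- Let S(n,m) := n!·[x^n]( e^x·(e^{2x} − 1)^m / m! ) be the entries of the generalized Stirling2 Sheffer triangle S2[2,1] = (e^s, e^{2s} − 1). Then in ℚ[[t]] one has Σ_{m≥0} S(m+1, m)·t^m = (1 + 2t)/(1 − 2t)^3; equivalently, (1 − 2t)^3 · Σ_{m≥0} S(m+1,m)·t^m = 1 + 2t. -/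
/-!
Writing `e^{ax} − 1 = x·h(x)` with `h(0) = a`, `h'(0) = a²/2`, the coefficient
`[x^{m+1}] e^x (e^{ax} − 1)^m` is `[x^1] e^x h^m = a^m + m a^{m−1}·a²/2`;
for `a = 2` this gives `S(m+1,m) = (m+1)²·2^m`.
Since `(m+1)² = 2·C(m+2,2) − C(m+1,1)`, the series `Σ (m+1)² t^m` is
`2(1−t)^{−3} − (1−t)^{−2}`, and rescaling `t ↦ 2t` gives the claim.
-/

open PowerSeries

/-- The entries of the generalized Stirling2 Sheffer triangle
`S2[2,1] = (e^s, e^{2s} − 1)`: `S(n,m) = n!·[x^n](e^x·(e^{2x} − 1)^m / m!)`. -/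
noncomputable def genStirling2_21 (n m : ℕ) : ℚ :=
  (n.factorial : ℚ) * coeff n (exp ℚ * (rescale (2 : ℚ) (exp ℚ) - 1) ^ m) / m.factorial

theorem rescale_exp_sub_one_eq_X_mul (a : ℚ) :
    rescale a (exp ℚ) - 1 = X * mk fun k => a ^ (k + 1) / (k + 1).factorial := by
  ext (_ | k)
  · rw [map_sub, coeff_rescale]
    simp
  · simp [coeff_rescale, coeff_exp, coeff_succ_X_mul, div_eq_mul_inv]

theorem coeff_succ_exp_mul_rescale_exp_sub_one_pow (a : ℚ) (m : ℕ) :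
    coeff (m + 1) (exp ℚ * (rescale a (exp ℚ) - 1) ^ m) = a ^ m * (1 + m * a / 2) := by
  set h : ℚ⟦X⟧ := mk fun k => a ^ (k + 1) / (k + 1).factorial
  have h_zero : constantCoeff h = a := by simp [h]
  have h_one : coeff 1 h = a ^ 2 / 2 := by simp [h]
  have exp_one : coeff 1 (exp ℚ) = 1 := by simp [coeff_exp]
  rw [rescale_exp_sub_one_eq_X_mul, mul_pow, mul_left_comm, add_comm, coeff_X_pow_mul,
    coeff_one_mul, coeff_one_pow, map_pow, h_zero, h_one, constantCoeff_exp, exp_one]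
  rcases m with _ | m
  · simp
  · rw [Nat.add_sub_cancel]
    push_cast
    ring

theorem genStirling2_21_succ_self (m : ℕ) : genStirling2_21 (m + 1) m = (m + 1) ^ 2 * 2 ^ m := by
  rw [genStirling2_21, coeff_succ_exp_mul_rescale_exp_sub_one_pow, Nat.factorial_succ]
  push_cast
  field_simp
  ring

theorem two_mul_add_choose_two (n : ℕ) :
    2 * (2 + n).choose 2 = (n + 1) ^ 2 + (1 + n).choose 1 := by
  rw [Nat.choose_two_right, Nat.choose_one_right, Nat.mul_div_cancel']
  · rw [show 2 + n - 1 = n + 1 by omega]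
    ring
  · exact (Nat.even_mul_pred_self _).two_dvd

theorem one_sub_X_pow_three_mul_mk_succ_sq {R : Type*} [CommRing R] :
    (1 - X : R⟦X⟧) ^ 3 * mk (fun m => (m + 1 : R) ^ 2) = 1 + X := by
  have hsq : (mk fun m => (m + 1 : R) ^ 2)
      = 2 * (mk fun n => ((2 + n).choose 2 : R)) - mk fun n => ((1 + n).choose 1 : R) := by
    ext n
    rw [map_sub, coeff_mk, coeff_mk, ← map_ofNat C, coeff_C_mul, coeff_mk, eq_sub_iff_add_eq]
    have h := congrArg (Nat.cast : ℕ → R) (two_mul_add_choose_two n)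
    push_cast at h
    exact h.symm
  rw [hsq]
  linear_combination 2 * mk_add_choose_mul_one_sub_pow_eq_one R 2
    - (1 - X) * mk_add_choose_mul_one_sub_pow_eq_one R 1

/-- The o.g.f. of the second (`d = 1`) diagonal of the triangle `S2[2,1]`:
`Σ_m S(m+1,m)·t^m = (1 + 2t)/(1 − 2t)^3`, stated in the equivalent form
`(1 − 2t)^3 · Σ_m S(m+1,m)·t^m = 1 + 2t` in `ℚ[[t]]`. -/
theorem genStirling2_21_diagonal_one_ogf :
    (1 - 2 * PowerSeries.X : ℚ⟦X⟧) ^ 3 * PowerSeries.mk (fun m => genStirling2_21 (m + 1) m)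
      = 1 + 2 * PowerSeries.X := by
  have hdiag : PowerSeries.mk (fun m => genStirling2_21 (m + 1) m)
      = rescale 2 (mk fun m => (m + 1 : ℚ) ^ 2) := by
    ext m
    rw [coeff_mk, coeff_rescale, coeff_mk, genStirling2_21_succ_self, mul_comm]
  have hX : rescale (2 : ℚ) X = 2 * X := by rw [rescale_X, map_ofNat]
  calc (1 - 2 * X : ℚ⟦X⟧) ^ 3 * PowerSeries.mk (fun m => genStirling2_21 (m + 1) m)
      = rescale 2 ((1 - X) ^ 3 * mk fun m => (m + 1 : ℚ) ^ 2) := by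
        rw [hdiag, map_mul, map_pow, map_sub, map_one, hX]
    _ = 1 + 2 * X := by rw [one_sub_X_pow_three_mul_mk_succ_sq, map_add, map_one, hX]
end

section
/- For every integer d ≥ 0, in ℚ[[t]] one has Σ_{m≥0} binom(d+m, m)^2 · t^m = ( Σ_{k=0}^{d} binom(d,k)^2 · t^k )/(1 − t)^{2d+1}; equivalently, (1 − t)^{2d+1} · Σ_{m≥0} binom(d+m,m)^2 · t^m = Σ_{k=0}^{d} binom(d,k)^2 · t^k. -/
/-!
Multiplying by `(1 - X)^(2d+1)` is inverting `Σ_m binom(2d+m, 2d) X^m`, so the claim is the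
coefficient identity `Σ_k binom(d,k)^2 binom(2d+n-k, 2d) = binom(d+n, d)^2`. Expanding
`binom((d-k) + (d+n), 2d)` by Vandermonde and summing over `k` first, the inner sum
`Σ_k binom(d,k)^2 binom(d-k,i)` collapses by trinomial revision and Vandermonde to
`binom(d,i) binom(2d-i,d)`; one more trinomial revision and Vandermonde give the square.
-/

open Finset PowerSeries

namespace Nat

theorem choose_mul_choose_sub_comm (n k i : ℕ) :
    n.choose k * (n - k).choose i = n.choose i * (n - i).choose k := by
  have hk := choose_mul (n := n) (Nat.le_add_right k i)
  have hi := choose_mul (n := n) (Nat.le_add_left i k)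
  rw [Nat.add_sub_cancel_left] at hk
  rw [Nat.add_sub_cancel] at hi
  rw [← hk, ← hi, choose_symm_add]

theorem add_choose_eq_sum_range_of_le {m k N : ℕ} (n : ℕ) (hk : m ≤ k) (hN : m ≤ N) :
    (m + n).choose k = ∑ i ∈ range (N + 1), m.choose i * n.choose (k - i) := by
  have hvanish : ∀ i ≥ m + 1, m.choose i * n.choose (k - i) = 0 := fun i hi => by
    rw [choose_eq_zero_of_lt hi, Nat.zero_mul]
  rw [add_choose_eq, Finset.Nat.sum_antidiagonal_eq_sum_range_succ_mk,
    eventually_constant_sum hvanish (show m + 1 ≤ k + 1 by omega),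
    eventually_constant_sum hvanish (show m + 1 ≤ N + 1 by omega)]

theorem sum_range_choose_sq_mul_choose_sub {d i : ℕ} (hi : i ≤ d) :
    ∑ k ∈ range (d + 1), d.choose k ^ 2 * (d - k).choose i
      = d.choose i * (2 * d - i).choose d := by
  calc ∑ k ∈ range (d + 1), d.choose k ^ 2 * (d - k).choose i
      = ∑ k ∈ range (d + 1), d.choose i * ((d - i).choose k * d.choose (d - k)) := by
        refine sum_congr rfl fun k hk => ?_
        rw [sq, Nat.mul_right_comm, choose_mul_choose_sub_comm,
          ← choose_symm (mem_range_succ_iff.mp hk), Nat.mul_assoc]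
    _ = d.choose i * (2 * d - i).choose d := by
        rw [← mul_sum, ← add_choose_eq_sum_range_of_le d (Nat.sub_le d i) (Nat.sub_le d i),
          show d - i + d = 2 * d - i by omega]

theorem sum_range_choose_sq_mul_choose_two_mul_add_sub (d n : ℕ) :
    ∑ k ∈ range (d + 1), d.choose k ^ 2 * (2 * d + n - k).choose (2 * d)
      = (d + n).choose d ^ 2 := by
  calc ∑ k ∈ range (d + 1), d.choose k ^ 2 * (2 * d + n - k).choose (2 * d)
      = ∑ k ∈ range (d + 1), ∑ i ∈ range (d + 1),
          d.choose k ^ 2 * (d - k).choose i * (d + n).choose (2 * d - i) := by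
        refine sum_congr rfl fun k hk => ?_
        have hkd := mem_range_succ_iff.mp hk
        rw [show 2 * d + n - k = d - k + (d + n) by omega,
          add_choose_eq_sum_range_of_le (d + n) (by omega) (Nat.sub_le d k), mul_sum]
        simp only [Nat.mul_assoc]
    _ = ∑ i ∈ range (d + 1),
          (∑ k ∈ range (d + 1), d.choose k ^ 2 * (d - k).choose i) *
            (d + n).choose (2 * d - i) := by
        rw [sum_comm]
        simp only [sum_mul]
    _ = ∑ i ∈ range (d + 1), (d + n).choose d * (d.choose i * n.choose (d - i)) := by
        refine sum_congr rfl fun i hi => ?_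
        have hid := mem_range_succ_iff.mp hi
        have hmul := choose_mul (n := d + n) (show d ≤ 2 * d - i by omega)
        rw [Nat.add_sub_cancel_left, show 2 * d - i - d = d - i by omega] at hmul
        rw [sum_range_choose_sq_mul_choose_sub hid, Nat.mul_assoc,
          Nat.mul_comm _ ((d + n).choose _), hmul]
        ring
    _ = (d + n).choose d ^ 2 := by
        rw [← mul_sum, ← add_choose_eq_sum_range_of_le n le_rfl le_rfl, sq]

end Nat

namespace PowerSeries

/-- Without `hk`, truncated subtraction would make the right side `choose 0 0 = 1` when `a = 0`
and `n < k`, while the coefficient is `0`. -/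
theorem coeff_mk_add_choose_mul_X_pow (R : Type*) [Semiring R] {a k n : ℕ} (hk : k ≤ a + n) :
    coeff n ((mk fun m => ((a + m).choose a : R)) * X ^ k) = ((a + n - k).choose a : R) := by
  rw [coeff_mul_X_pow']
  split_ifs with h
  · rw [coeff_mk, Nat.add_sub_assoc h]
  · rw [Nat.choose_eq_zero_of_lt (show a + n - k < a by omega), Nat.cast_zero]

end PowerSeries

/-- **O.g.f.s of the diagonals of the squared Pascal triangle A008459.**
For every `d ≥ 0`, in `ℚ[[t]]` one has
`Σ_{m≥0} binom(d+m,m)^2·t^m = (Σ_{k=0}^{d} binom(d,k)^2·t^k)/(1 − t)^{2d+1}`,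
stated in the equivalent multiplied form
`(1 − t)^{2d+1}·Σ_{m≥0} binom(d+m,m)^2·t^m = Σ_{k=0}^{d} binom(d,k)^2·t^k`. -/
theorem pascal_squared_diagonal_ogf (d : ℕ) :
    (1 - PowerSeries.X : ℚ⟦X⟧) ^ (2 * d + 1) *
        PowerSeries.mk (fun m => (((d + m).choose m : ℚ)) ^ 2)
      = ∑ k ∈ Finset.range (d + 1),
          PowerSeries.C ((d.choose k : ℚ) ^ 2) * PowerSeries.X ^ k := by
  rw [← invOneSubPow_inv_eq_one_sub_pow, Units.inv_eq_val_inv, Units.inv_mul_eq_iff_eq_mul,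
    invOneSubPow_val_succ_eq_mk_add_choose]
  ext n
  rw [coeff_mk, ← Nat.choose_symm_add, ← Nat.cast_pow,
    ← Nat.sum_range_choose_sq_mul_choose_two_mul_add_sub, mul_sum, map_sum]
  push_cast
  refine sum_congr rfl fun k hk => ?_
  rw [mul_left_comm, coeff_C_mul,
    coeff_mk_add_choose_mul_X_pow ℚ (by have := mem_range.mp hk; omega)]
end

section
/- For every integer d ≥ 1, in ℚ[[t]] one has Σ_{m≥0} binom(d+m, m)·binom(d+m+1, m+1)·t^m = ( (d+1)·Σ_{k=1}^{d} N(d,k)·t^{k−1} )/(1 − t)^{2d+1}, where N(d,k) = (1/d)·binom(d,k)·binom(d,k−1) are the Narayana numbers; equivalently, (1 − t)^{2d+1} · Σ_{m≥0} binom(d+m,m)·binom(d+m+1,m+1)·t^m = ((d+1)/d)·Σ_{k=1}^{d} binom(d,k)·binom(d,k−1)·t^{k−1}. -/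
/-!
Both sides' coefficient sequences satisfy the first-order recurrence
`(m+1)(m+2) a(m+1) = (d+m+1)(d+m+2) a(m)`. For `binom(d+m,m) binom(d+m+1,m+1)` this is two
applications of `(n+1) binom(n,k) = (k+1) binom(n+1,k+1)`. The coefficient of `t^m` on the
right is a sum over `j < d` of `binom(d,j+1) binom(d,j) binom(2d+m-j,2d)`, and the recurrence
holds termwise up to a telescoping difference whose certificate is `j(j+1)` times the
`(m+1)`-st term (Zeilberger). Finally the values at `m = 0` are `d+1` and `(d+1)/d · d`.
-/

open PowerSeries Finset

section CastChoose

variable {R : Type*} [CommRing R]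

theorem cast_choose_succ_mul (n k : ℕ) :
    (n.choose (k + 1) : R) * (k + 1) = n.choose k * (n - k) := by
  rcases le_or_gt k n with hkn | hnk
  · have h := congrArg (Nat.cast : ℕ → R) (Nat.choose_succ_right_eq n k)
    push_cast [hkn] at h
    exact h
  · simp [Nat.choose_eq_zero_of_lt hnk, Nat.choose_eq_zero_of_lt (hnk.trans (Nat.lt_succ_self k))]

theorem cast_succ_choose_mul (n k : ℕ) :
    ((n + 1).choose k : R) * (n + 1 - k) = (n + 1) * n.choose k := by
  rcases le_or_gt k (n + 1) with hkn | hnk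
  · have h := congrArg (Nat.cast : ℕ → R) (Nat.choose_mul_succ_eq n k)
    push_cast [hkn] at h
    rw [← h, mul_comm]
  · simp [Nat.choose_eq_zero_of_lt hnk, Nat.choose_eq_zero_of_lt (Nat.lt_of_succ_lt hnk)]

end CastChoose

theorem eq_of_first_order_recurrence {M₀ : Type*} [MonoidWithZero M₀] [IsLeftCancelMulZero M₀]
    {p q u v : ℕ → M₀} (hp : ∀ n, p n ≠ 0) (hu : ∀ n, p n * u (n + 1) = q n * u n)
    (hv : ∀ n, p n * v (n + 1) = q n * v n) (h0 : u 0 = v 0) : u = v := by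
  funext n
  induction n with
  | zero => exact h0
  | succ n ih => exact mul_left_cancel₀ (hp n) (by rw [hu, hv, ih])

theorem choose_mul_choose_succ_recurrence (d m : ℕ) :
    ((m : ℚ) + 1) * (m + 2) * ((d + m + 1).choose (m + 1) * (d + m + 2).choose (m + 2))
      = ((d : ℚ) + m + 1) * (d + m + 2) * ((d + m).choose m * (d + m + 1).choose (m + 1)) := by
  have h₁ := congrArg (Nat.cast : ℕ → ℚ) (Nat.add_one_mul_choose_eq (d + m) m)
  have h₂ := congrArg (Nat.cast : ℕ → ℚ) (Nat.add_one_mul_choose_eq (d + m + 1) (m + 1))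
  push_cast at h₁ h₂
  linear_combination (-((m : ℚ) + 1) * (d + m + 1).choose (m + 1)) * h₂
    - ((d + m + 2) * (d + m + 1).choose (m + 1) : ℚ) * h₁

/-- For `j ≤ d` the subtraction does not truncate, and the last factor vanishes exactly when
`m < j`. -/
def narayanaTerm (d m j : ℕ) : ℚ :=
  d.choose (j + 1) * d.choose j * (2 * d + m - j).choose (2 * d)

theorem narayanaTerm_telescope {d j : ℕ} (hj : j ≤ d) (m : ℕ) :
    ((m : ℚ) + 1) * (m + 2) * narayanaTerm d (m + 1) j
        - ((d : ℚ) + m + 1) * (d + m + 2) * narayanaTerm d m j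
      = j * (j + 1) * narayanaTerm d (m + 1) j
        - (j + 1) * (j + 2) * narayanaTerm d (m + 1) (j + 1) := by
  have hn : 2 * d + (m + 1) - j = 2 * d + m - j + 1 := by omega
  have hn' : 2 * d + (m + 1) - (j + 1) = 2 * d + m - j := by omega
  simp only [narayanaTerm, hn, hn']
  have h₁ := cast_choose_succ_mul (R := ℚ) d j
  have h₂ := cast_choose_succ_mul (R := ℚ) d (j + 1)
  have h₃ := cast_succ_choose_mul (R := ℚ) (2 * d + m - j) (2 * d)
  push_cast [show j ≤ 2 * d + m by omega] at h₂ h₃ ⊢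
  linear_combination
    (d.choose j : ℚ) * d.choose (j + 1) * (m + 2 + j) * h₃
      + (j + 1) * d.choose (j + 1) * (2 * d + m - j).choose (2 * d) * h₂
      + (d - j - 1) * d.choose (j + 1) * (2 * d + m - j).choose (2 * d) * h₁

theorem sum_narayanaTerm_recurrence (d m : ℕ) :
    ((m : ℚ) + 1) * (m + 2) * ∑ j ∈ range d, narayanaTerm d (m + 1) j
      = ((d : ℚ) + m + 1) * (d + m + 2) * ∑ j ∈ range d, narayanaTerm d m j := by
  set f : ℕ → ℚ := fun j => j * (j + 1) * narayanaTerm d (m + 1) j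
  rw [← sub_eq_zero, mul_sum, mul_sum, ← sum_sub_distrib]
  calc _ = ∑ j ∈ range d, (f j - f (j + 1)) := sum_congr rfl fun j hj => by
          rw [narayanaTerm_telescope (mem_range.1 hj).le m]
          push_cast [f]
          ring
    _ = f 0 - f d := sum_range_sub' f d
    _ = 0 := by simp [f, narayanaTerm]

theorem sum_narayanaTerm_zero (d : ℕ) : ∑ j ∈ range d, narayanaTerm d 0 j = d := by
  rcases Nat.eq_zero_or_pos d with rfl | hd
  · simp
  rw [sum_eq_single_of_mem 0 (mem_range.2 hd)]
  · simp [narayanaTerm]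
  · intro j _ hj
    rw [narayanaTerm, Nat.choose_eq_zero_of_lt (by omega : 2 * d + 0 - j < 2 * d), Nat.cast_zero,
      mul_zero]

theorem choose_mul_choose_succ_eq_mul_sum_narayanaTerm {d : ℕ} (hd : d ≠ 0) (m : ℕ) :
    ((d + m).choose m : ℚ) * (d + m + 1).choose (m + 1)
      = (d + 1) / d * ∑ j ∈ range d, narayanaTerm d m j := by
  refine congrFun (eq_of_first_order_recurrence
    (u := fun m => ((d + m).choose m : ℚ) * (d + m + 1).choose (m + 1))
    (v := fun m => (d + 1) / d * ∑ j ∈ range d, narayanaTerm d m j)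
    (fun m => by positivity) (choose_mul_choose_succ_recurrence d) (fun m => ?_) ?_) m
  · rw [mul_left_comm, sum_narayanaTerm_recurrence, mul_left_comm]
  · simp [sum_narayanaTerm_zero, hd]

theorem coeff_narayana_mul_mk_choose (d m : ℕ) :
    coeff m ((∑ j ∈ range d, C ((d.choose (j + 1) : ℚ) * d.choose j) * X ^ j) *
      mk fun n => ((2 * d + n).choose (2 * d) : ℚ)) = ∑ j ∈ range d, narayanaTerm d m j := by
  rw [sum_mul, map_sum]
  refine sum_congr rfl fun j hj => ?_
  have hjd := mem_range.1 hj
  rw [mul_assoc, coeff_C_mul, coeff_X_pow_mul', narayanaTerm]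
  split_ifs with hjm
  · rw [coeff_mk, show 2 * d + (m - j) = 2 * d + m - j by omega]
  · rw [Nat.choose_eq_zero_of_lt (by omega : 2 * d + m - j < 2 * d), Nat.cast_zero, mul_zero]

/-- **O.g.f.s of the diagonals of Pascal times A135278 and the Narayana triangle.**
For every `d ≥ 1`, in `ℚ[[t]]` one has
`Σ_{m≥0} binom(d+m,m)·binom(d+m+1,m+1)·t^m
  = ((d+1)·Σ_{k=1}^{d} N(d,k)·t^{k−1})/(1 − t)^{2d+1}`,
with `N(d,k) = (1/d)·binom(d,k)·binom(d,k−1)` the Narayana numbers; stated in the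
equivalent multiplied form `(1 − t)^{2d+1}·Σ_{m≥0} binom(d+m,m)·binom(d+m+1,m+1)·t^m
  = ((d+1)/d)·Σ_{k=1}^{d} binom(d,k)·binom(d,k−1)·t^{k−1}`. -/
theorem pascal_times_A135278_diagonal_ogf (d : ℕ) (hd : 1 ≤ d) :
    (1 - PowerSeries.X : ℚ⟦X⟧) ^ (2 * d + 1) *
        PowerSeries.mk (fun m =>
          ((d + m).choose m : ℚ) * ((d + m + 1).choose (m + 1) : ℚ))
      = PowerSeries.C (R := ℚ) (((d : ℚ) + 1) / d) *
          ∑ k ∈ Finset.Icc 1 d,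
            PowerSeries.C (R := ℚ) ((d.choose k : ℚ) * (d.choose (k - 1) : ℚ))
              * PowerSeries.X ^ (k - 1) := by
  set P : ℚ⟦X⟧ := ∑ j ∈ range d, C ((d.choose (j + 1) : ℚ) * d.choose j) * X ^ j
  set I : ℚ⟦X⟧ := mk fun n => ((2 * d + n).choose (2 * d) : ℚ)
  have hP : ∑ k ∈ Icc 1 d, C ((d.choose k : ℚ) * d.choose (k - 1)) * X ^ (k - 1) = P := by
    rw [← Ico_add_one_right_eq_Icc, ← zero_add 1, ← sum_Ico_add', ← range_eq_Ico]
    simp only [Nat.add_sub_cancel, P]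
  have hmk : mk (fun m => ((d + m).choose m : ℚ) * (d + m + 1).choose (m + 1))
      = C (((d : ℚ) + 1) / d) * (P * I) := by
    ext m
    rw [coeff_mk, coeff_C_mul, coeff_narayana_mul_mk_choose,
      choose_mul_choose_succ_eq_mul_sum_narayanaTerm (by omega)]
  rw [hP, hmk]
  calc (1 - X : ℚ⟦X⟧) ^ (2 * d + 1) * (C (((d : ℚ) + 1) / d) * (P * I))
      = C (((d : ℚ) + 1) / d) * P * (I * (1 - X) ^ (2 * d + 1)) := by ring
    _ = C (((d : ℚ) + 1) / d) * P := by rw [mk_add_choose_mul_one_sub_pow_eq_one, mul_one]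
end
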